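/- For the classifier κ(x₁,x₂,x₃,x₄) = x₁ ∧ (x₂ ∨ (x₃ ∧ x₄)) with v = (1,1,1,1), the Responsibility score over AXps gives Sc_R(1) = Sc_R(2) = 1/2, but the dual Responsibility score over CXps gives Sc_R^d(1) = 1 and Sc_R^d(2) = 1/2; hence the Responsibility score fails weak duality. -/

import Mathlib

open Finset

/-- `S` is a weak abductive explanation (WAXp). -/
def WAXp {m : ℕ} {K : Type*} {D : Fin m → Type*} (κ : (∀ i, D i) → K) (v : ∀ i, D i)
    (S : Finset (Fin m)) : Prop :=
  ∀ x : ∀ i, D i, (∀ i ∈ S, x i = v i) → κ x = κ v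

/-- `S` is a weak contrastive explanation (WCXp). -/
def WCXp {m : ℕ} {K : Type*} {D : Fin m → Type*} (κ : (∀ i, D i) → K) (v : ∀ i, D i)
    (S : Finset (Fin m)) : Prop :=
  ∃ x : ∀ i, D i, (∀ i ∉ S, x i = v i) ∧ κ x ≠ κ v

/-- An AXp is a subset-minimal WAXp. -/
def AXp {m : ℕ} {K : Type*} {D : Fin m → Type*} (κ : (∀ i, D i) → K) (v : ∀ i, D i)
    (S : Finset (Fin m)) : Prop :=
  WAXp κ v S ∧ ∀ T ⊂ S, ¬ WAXp κ v T

/-- A CXp is a subset-minimal WCXp. -/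
def CXp {m : ℕ} {K : Type*} {D : Fin m → Type*} (κ : (∀ i, D i) → K) (v : ∀ i, D i)
    (S : Finset (Fin m)) : Prop :=
  WCXp κ v S ∧ ∀ T ⊂ S, ¬ WCXp κ v T

/-- The classifier `κ(x₁,x₂,x₃,x₄) = x₁ ∧ (x₂ ∨ (x₃ ∧ x₄))` (features are
`0`-indexed). -/
def kappa4 (x : Fin 4 → Bool) : Bool :=
  x 0 && (x 1 || (x 2 && x 3))

/-- The instance `v = (1,1,1,1)`. -/
def v4 : Fin 4 → Bool := fun _ => true

open Classical in
/-- The set of all AXps. -/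
noncomputable def AXps {m : ℕ} {K : Type*} {D : Fin m → Type*} (κ : (∀ i, D i) → K)
    (v : ∀ i, D i) : Finset (Finset (Fin m)) :=
  univ.powerset.filter (AXp κ v)

open Classical in
/-- The set of all CXps. -/
noncomputable def CXps {m : ℕ} {K : Type*} {D : Fin m → Type*} (κ : (∀ i, D i) → K)
    (v : ∀ i, D i) : Finset (Finset (Fin m)) :=
  univ.powerset.filter (CXp κ v)

open Classical in
/-- The Responsibility score of feature `i` for a family `𝒳` of sets of
features: `max{1/|S| : S ∈ 𝒳, i ∈ S}` (`0` if no such set exists). -/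
noncomputable def respScore {m : ℕ} (𝒳 : Finset (Finset (Fin m))) (i : Fin m) : ℚ :=
  (((𝒳.filter (fun S => i ∈ S)).image (fun S => 1 / (S.card : ℚ))).max).getD 0

/-! Since `κ` is monotone and `v` is the top point, a set `S` of features is a weak AXp
exactly when `κ` already outputs `κ v` on the indicator of `S`, and a weak CXp exactly when
it does not on the indicator of the complement of `S`. Minimality then becomes a finite check
on subsets of four features: in the paper's 1-based numbering the AXps are `{1,2}, {1,3,4}`
and the CXps `{1}, {2,3}, {2,4}` (the minimal hitting sets of the AXps). The Responsibility
score of `i` is `1 / k` for the least size `k` of an explanation containing `i`, which gives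
the four values. -/

theorem respScore_eq_one_div_card {m : ℕ} {𝒳 : Finset (Finset (Fin m))} {i : Fin m}
    {S : Finset (Fin m)} (hS : S ∈ 𝒳) (hiS : i ∈ S)
    (hmin : ∀ T ∈ 𝒳, i ∈ T → S.card ≤ T.card) :
    respScore 𝒳 i = 1 / (S.card : ℚ) := by
  have hpos : (0 : ℚ) < S.card := by exact_mod_cast card_pos.mpr ⟨i, hiS⟩
  have hmax : ((𝒳.filter (fun T => i ∈ T)).image (fun T => 1 / (T.card : ℚ))).max =
      ↑(1 / (S.card : ℚ)) := by
    refine le_antisymm (Finset.max_le fun q hq => ?_) (le_max (mem_image_of_mem _ ?_))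
    · obtain ⟨T, hT, rfl⟩ := mem_image.mp hq
      obtain ⟨hT𝒳, hiT⟩ := mem_filter.mp hT
      exact WithBot.coe_le_coe.mpr <|
        one_div_le_one_div_of_le hpos (by exact_mod_cast hmin T hT𝒳 hiT)
    · exact mem_filter.mpr ⟨hS, hiS⟩
  rw [respScore, hmax]
  rfl

theorem waxp_true_iff {m : ℕ} {K : Type*} [PartialOrder K] {κ : (Fin m → Bool) → K}
    (hκ : Monotone κ) (S : Finset (Fin m)) :
    WAXp κ (fun _ => true) S ↔ κ (fun i => decide (i ∈ S)) = κ (fun _ => true) := by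
  refine ⟨fun h => h _ fun i hi => decide_eq_true hi, fun h x hx => ?_⟩
  have hle : (fun i => decide (i ∈ S)) ≤ x := fun i => by by_cases hi : i ∈ S <;> simp [hi, hx]
  exact le_antisymm (hκ le_top) (h ▸ hκ hle)

theorem wcxp_true_iff {m : ℕ} {K : Type*} [PartialOrder K] {κ : (Fin m → Bool) → K}
    (hκ : Monotone κ) (S : Finset (Fin m)) :
    WCXp κ (fun _ => true) S ↔ κ (fun i => decide (i ∉ S)) ≠ κ (fun _ => true) := by
  refine ⟨fun ⟨x, hx, hκx⟩ h => hκx ?_, fun h => ⟨_, fun i hi => decide_eq_true hi, h⟩⟩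
  have hle : (fun i => decide (i ∉ S)) ≤ x := fun i => by by_cases hi : i ∈ S <;> simp [hi, hx]
  exact le_antisymm (hκ le_top) (h ▸ hκ hle)

-- On `Bool`, `⊓` and `⊔` are `&&` and `||`.
theorem kappa4_monotone : Monotone kappa4 := fun _ _ h =>
  inf_le_inf (h 0) (sup_le_sup (h 1) (inf_le_inf (h 2) (h 3)))

theorem axps_kappa4 : AXps kappa4 v4 = {{0, 1}, {0, 2, 3}} := by
  ext S
  unfold v4
  simp only [AXps, AXp, waxp_true_iff kappa4_monotone, mem_filter, mem_powerset,
    subset_univ, true_and]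
  revert S
  decide

theorem cxps_kappa4 : CXps kappa4 v4 = {{0}, {1, 2}, {1, 3}} := by
  ext S
  unfold v4
  simp only [CXps, CXp, wcxp_true_iff kappa4_monotone, mem_filter, mem_powerset,
    subset_univ, true_and]
  revert S
  decide

theorem stmt18 :
    respScore (AXps kappa4 v4) 0 = 1 / 2 ∧ respScore (AXps kappa4 v4) 1 = 1 / 2 ∧
      respScore (CXps kappa4 v4) 0 = 1 ∧ respScore (CXps kappa4 v4) 1 = 1 / 2 := by
  rw [axps_kappa4, cxps_kappa4]
  refine ⟨?_, ?_, ?_, ?_⟩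
  · rw [respScore_eq_one_div_card (S := {0, 1}) (by simp) (by decide) (by decide)]
    simp
  · rw [respScore_eq_one_div_card (S := {0, 1}) (by simp) (by decide) (by decide)]
    simp
  · rw [respScore_eq_one_div_card (S := {0}) (by simp) (by decide) (by decide)]
    simp
  · rw [respScore_eq_one_div_card (S := {1, 2}) (by simp) (by decide) (by decide)]
    simp
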